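/- arXiv:1201.4599 — 3 statements merged into one kernel-verified Lean document; each statement's English description precedes it below -/
import Mathlib

section
/- Let X be a set, φ : X × X → ℂ a kernel of positive type, and suppose (E, e) and (E', e') are two GNS pairs for φ, i.e. φ(x,y) = ⟪e(x), e(y)⟫_E = ⟪e'(x), e'(y)⟫_{E'} for all x, y, and the linear span of e(X) is dense in E and the linear span of e'(X) is dense in E'. Then there exists a unique linear isometric isomorphism u : E → E' with e' = u ∘ e. -/
/-!
Both `e` and `e'` factor through the formal linear combinations `X →₀ ℂ`, and since they have
the same Gram matrix, `∑ cₓ e(x) ↦ ∑ cₓ e'(x)` preserves norms. By density of the spans this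
norm-preserving correspondence extends to an isometric isomorphism `E ≃ₗᵢ E'`; it is unique
because a continuous linear map is determined by its values on a set with dense span.
-/

open Finsupp

section GramMatrix

variable {X 𝕜 E E' : Type*} [RCLike 𝕜]
  [NormedAddCommGroup E] [InnerProductSpace 𝕜 E] [NormedAddCommGroup E'] [InnerProductSpace 𝕜 E']
  {e : X → E} {e' : X → E'}

theorem inner_linearCombination_eq_of_inner_eq
    (h : ∀ x y, inner 𝕜 (e x) (e y) = inner 𝕜 (e' x) (e' y)) (c d : X →₀ 𝕜) :
    inner 𝕜 (linearCombination 𝕜 e c) (linearCombination 𝕜 e d) =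
      inner 𝕜 (linearCombination 𝕜 e' c) (linearCombination 𝕜 e' d) := by
  simp only [linearCombination_apply, Finsupp.sum_inner, Finsupp.inner_sum, inner_smul_left,
    inner_smul_right, h]

theorem norm_linearCombination_eq_of_inner_eq
    (h : ∀ x y, inner 𝕜 (e x) (e y) = inner 𝕜 (e' x) (e' y)) (c : X →₀ 𝕜) :
    ‖linearCombination 𝕜 e' c‖ = ‖linearCombination 𝕜 e c‖ := by
  rw [@norm_eq_sqrt_re_inner 𝕜, @norm_eq_sqrt_re_inner 𝕜,
    inner_linearCombination_eq_of_inner_eq h]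

theorem denseRange_linearCombination_iff :
    DenseRange (linearCombination 𝕜 e) ↔ Dense (Submodule.span 𝕜 (Set.range e) : Set E) := by
  rw [DenseRange, ← LinearMap.coe_range, range_linearCombination]

theorem exists_linearIsometryEquiv_apply_eq_of_inner_eq [CompleteSpace E] [CompleteSpace E']
    (h : ∀ x y, inner 𝕜 (e x) (e y) = inner 𝕜 (e' x) (e' y))
    (hdense : Dense (Submodule.span 𝕜 (Set.range e) : Set E))
    (hdense' : Dense (Submodule.span 𝕜 (Set.range e') : Set E')) :
    ∃ u : E ≃ₗᵢ[𝕜] E', ∀ x, u (e x) = e' x := by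
  have hT := denseRange_linearCombination_iff.2 hdense
  have hT' := denseRange_linearCombination_iff.2 hdense'
  have hnorm := norm_linearCombination_eq_of_inner_eq h
  refine ⟨(LinearEquiv.refl 𝕜 (X →₀ 𝕜)).extendOfIsometry _ _ hT hT' hnorm, fun x => ?_⟩
  simpa using (LinearEquiv.refl 𝕜 (X →₀ 𝕜)).extendOfIsometry_eq _ _ hT hT' hnorm (single x 1)

theorem LinearIsometryEquiv.ext_on {u v : E ≃ₗᵢ[𝕜] E'} {s : Set E}
    (hs : Dense (Submodule.span 𝕜 s : Set E)) (h : Set.EqOn u v s) : u = v := by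
  have : u.toContinuousLinearEquiv.toContinuousLinearMap =
      v.toContinuousLinearEquiv.toContinuousLinearMap :=
    ContinuousLinearMap.ext_on hs h
  ext z
  exact congr($this z)

end GramMatrix

open ComplexOrder in
theorem stmt_1_general {X : Type*} {E E' : Type*}
    [NormedAddCommGroup E] [InnerProductSpace ℂ E] [CompleteSpace E]
    [NormedAddCommGroup E'] [InnerProductSpace ℂ E'] [CompleteSpace E']
    (φ : X → X → ℂ) (e : X → E) (e' : X → E')
    (he : ∀ x y, φ x y = inner ℂ (e x) (e y))
    (he' : ∀ x y, φ x y = inner ℂ (e' x) (e' y))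
    (hdense : Dense (Submodule.span ℂ (Set.range e) : Set E))
    (hdense' : Dense (Submodule.span ℂ (Set.range e') : Set E')) :
    ∃! u : E ≃ₗᵢ[ℂ] E', ∀ x, e' x = u (e x) := by
  have hgram : ∀ x y, inner ℂ (e x) (e y) = inner ℂ (e' x) (e' y) := fun x y => by
    rw [← he, ← he']
  obtain ⟨u, hu⟩ := exists_linearIsometryEquiv_apply_eq_of_inner_eq hgram hdense hdense'
  refine ⟨u, fun x => (hu x).symm, fun v hv => ?_⟩
  exact LinearIsometryEquiv.ext_on hdense (by rintro _ ⟨x, rfl⟩; rw [← hv, hu])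

open ComplexOrder in
theorem stmt_1 {X : Type*} {E E' : Type*}
    [NormedAddCommGroup E] [InnerProductSpace ℂ E] [CompleteSpace E]
    [NormedAddCommGroup E'] [InnerProductSpace ℂ E'] [CompleteSpace E']
    (φ : X → X → ℂ) (e : X → E) (e' : X → E')
    (hpos : ∀ (n : ℕ) (x : Fin n → X) (c : Fin n → ℂ),
      0 ≤ ∑ i : Fin n, ∑ j : Fin n, starRingEnd ℂ (c i) * c j * φ (x i) (x j))
    (he : ∀ x y, φ x y = inner ℂ (e x) (e y))
    (he' : ∀ x y, φ x y = inner ℂ (e' x) (e' y))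
    (hdense : Dense (Submodule.span ℂ (Set.range e) : Set E))
    (hdense' : Dense (Submodule.span ℂ (Set.range e') : Set E')) :
    ∃! u : E ≃ₗᵢ[ℂ] E', ∀ x, e' x = u (e x) :=
  stmt_1_general φ e e' he he' hdense hdense'
end

section
/- Let ψ : X × X → ℝ be a kernel conditionally of negative type and let t ≥ 0. Then the kernel φ_t(x,y) = exp(−t ψ(x,y)) is of positive type on X (Schoenberg's theorem, one direction). -/
/-!
Fix a base point `x₀`. Conditional negativity, applied to the points `x₀, x₁, …, xₙ` with weights
`-∑ vᵢ, v₁, …, vₙ`, says that `ψ(x, x₀) + ψ(x₀, y) - ψ(x, y)` is of positive type. By the Schur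
product theorem so are its entrywise powers, hence its entrywise exponential. Finally
`exp(-t ψ(x, y))` is the entrywise exponential of `t` times that kernel, rescaled by `f(x) f(y)`
with `f(x) = exp(-t ψ(x, x₀))`.
-/

open Finset Matrix
open scoped ComplexOrder Nat

namespace Matrix

variable {ι : Type*} [Fintype ι]

theorem star_dotProduct_mulVec_eq_sum_sum (M : Matrix ι ι ℝ) (v : ι → ℝ) :
    star v ⬝ᵥ (M *ᵥ v) = ∑ i, ∑ j, v i * v j * M i j := by
  simp only [star_trivial, dotProduct, mulVec, Finset.mul_sum]
  exact sum_congr rfl fun i _ => sum_congr rfl fun j _ => by ring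

theorem posSemidef_iff_sum_sum_nonneg {M : Matrix ι ι ℝ} :
    M.PosSemidef ↔ M.IsHermitian ∧ ∀ v : ι → ℝ, 0 ≤ ∑ i, ∑ j, v i * v j * M i j := by
  simp only [posSemidef_iff_dotProduct_mulVec, star_dotProduct_mulVec_eq_sum_sum]

theorem PosSemidef.sum_sum_nonneg {M : Matrix ι ι ℝ} (hM : M.PosSemidef) (v : ι → ℝ) :
    0 ≤ ∑ i, ∑ j, v i * v j * M i j :=
  (posSemidef_iff_sum_sum_nonneg.mp hM).2 v

theorem PosSemidef.vecMulVec_hadamard {M : Matrix ι ι ℝ} (hM : M.PosSemidef) (d : ι → ℝ) :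
    (vecMulVec d d ⊙ M).PosSemidef := by
  simpa using (posSemidef_vecMulVec_self_star d).hadamard hM

theorem PosSemidef.map_pow {𝕜 : Type*} [RCLike 𝕜] {A : Matrix ι ι 𝕜} (hA : A.PosSemidef)
    (k : ℕ) : (A.map (· ^ k)).PosSemidef := by
  induction k with
  | zero =>
    convert posSemidef_vecMulVec_self_star (1 : ι → 𝕜) using 1
    ext i j
    simp [vecMulVec]
  | succ k ih =>
    convert ih.hadamard hA using 1
    ext i j
    simp [pow_succ]

theorem PosSemidef.map_exp {A : Matrix ι ι ℝ} (hA : A.PosSemidef) :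
    (A.map Real.exp).PosSemidef := by
  refine posSemidef_iff_sum_sum_nonneg.mpr ⟨hA.isHermitian.map _ fun _ => rfl, fun v => ?_⟩
  have hsum : HasSum (fun k : ℕ => (k ! : ℝ)⁻¹ * ∑ i, ∑ j, v i * v j * A i j ^ k)
      (∑ i, ∑ j, v i * v j * Real.exp (A i j)) := by
    simp only [Finset.mul_sum]
    refine hasSum_sum fun i _ => hasSum_sum fun j _ => ?_
    simpa only [Real.exp_eq_exp_ℝ, div_eq_inv_mul, mul_left_comm] using
      (NormedSpace.expSeries_div_hasSum_exp (A i j)).mul_left (v i * v j)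
  exact hsum.nonneg fun k => mul_nonneg (by positivity) ((hA.map_pow k).sum_sum_nonneg v)

end Matrix

structure IsCondNegType {X : Type*} (ψ : X → X → ℝ) : Prop where
  apply_self : ∀ x, ψ x x = 0
  symm : ∀ x y, ψ y x = ψ x y
  sum_sum_nonpos : ∀ (n : ℕ) (x : Fin n → X) (ζ : Fin n → ℝ), ∑ i, ζ i = 0 →
    ∑ i, ∑ j, ψ (x i) (x j) * ζ i * ζ j ≤ 0

namespace IsCondNegType

variable {X : Type*} {ψ : X → X → ℝ}

theorem posSemidef_of_basepoint (hψ : IsCondNegType ψ) (x₀ : X) {n : ℕ} (x : Fin n → X) :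
    (of fun i j => ψ (x i) x₀ + ψ x₀ (x j) - ψ (x i) (x j)).PosSemidef := by
  refine posSemidef_iff_sum_sum_nonneg.mpr ⟨?_, fun v => ?_⟩
  · ext i j
    simp only [conjTranspose_apply, of_apply, star_trivial]
    rw [hψ.symm (x i) (x j), hψ.symm x₀ (x i), hψ.symm x₀ (x j)]
    ring
  · have h := hψ.sum_sum_nonpos (n + 1) (Fin.cons x₀ x) (Fin.cons (-∑ i, v i) v)
      (by simp [Fin.sum_cons])
    simp only [Fin.sum_univ_succ, Fin.cons_zero, Fin.cons_succ, hψ.apply_self, zero_mul, mul_neg,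
      neg_mul, Finset.mul_sum, Finset.sum_mul, sum_neg_distrib, sum_const_zero, sum_add_distrib,
      mul_assoc] at h
    rw [sum_comm (f := fun j i => ψ x₀ (x j) * (v i * v j))] at h
    simp only [of_apply, mul_comm (v _ * v _), add_mul, sub_mul, sum_add_distrib, sum_sub_distrib]
    linarith

theorem posSemidef_exp_neg_mul (hψ : IsCondNegType ψ) {t : ℝ} (ht : 0 ≤ t) {n : ℕ}
    (x : Fin n → X) : (of fun i j => Real.exp (-t * ψ (x i) (x j))).PosSemidef := by
  cases n with
  | zero => exact Subsingleton.elim (0 : Matrix (Fin 0) (Fin 0) ℝ) (of _) ▸ .zero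
  | succ n =>
    set x₀ := x 0
    convert (((hψ.posSemidef_of_basepoint x₀ x).smul ht).map_exp).vecMulVec_hadamard
      fun i => Real.exp (-t * ψ (x i) x₀) using 1
    ext i j
    simp only [of_apply, hadamard_apply, vecMulVec_apply, map_apply, Matrix.smul_apply, smul_eq_mul,
      ← Real.exp_add, hψ.symm x₀ (x j)]
    congr 1
    ring

end IsCondNegType

theorem stmt_7 {X : Type*} (ψ : X → X → ℝ) (t : ℝ) (ht : 0 ≤ t)
    (hdiag : ∀ x, ψ x x = 0) (hsym : ∀ x y, ψ y x = ψ x y)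
    (hcnt : ∀ (n : ℕ) (x : Fin n → X) (ζ : Fin n → ℝ), (∑ i, ζ i) = 0 →
      ∑ i : Fin n, ∑ j : Fin n, ψ (x i) (x j) * ζ i * ζ j ≤ 0) :
    ∀ (n : ℕ) (x : Fin n → X) (c : Fin n → ℝ),
      0 ≤ ∑ i : Fin n, ∑ j : Fin n, c i * c j * Real.exp (-t * ψ (x i) (x j)) := fun _ x c =>
  ((IsCondNegType.mk hdiag hsym hcnt).posSemidef_exp_neg_mul ht x).sum_sum_nonneg c
end

section
/- Uniqueness in the affine GNS representation of a CNT kernel: let ψ : X × X → ℝ, and suppose e : X → E and e' : X → E' are maps into real Hilbert spaces with ψ(x,y) = ‖e(x) − e(y)‖² = ‖e'(x) − e'(y)‖² for all x,y, such that the affine span of e(X) is dense in E and the affine span of e'(X) is dense in E'. Then there exists a unique affine isometry u : E → E' with e' = u ∘ e. -/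
open scoped InnerProductSpace

/-!
Fix `x₀`. By polarization, the distance condition says that the families `e x - e x₀` and
`e' x - e' x₀` have the same Gram matrix, so finite linear combinations of them with equal
coefficients have equal norms. Hence `∑ cₓ (e x - e x₀) ↦ ∑ cₓ (e' x - e' x₀)` is a well-defined
linear isometry on the span of the first family, which is dense because the affine span of `e`
is; as `E'` is complete it extends by continuity to all of `E`, and conjugating by the
translations gives `u`. Uniqueness: an affine map is determined on the affine span of a set, and
an affine isometry is continuous.
-/

theorem AffineSubspace.dense_direction {R V P : Type*} [Ring R] [AddCommGroup V] [Module R V]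
    [TopologicalSpace P] [AddTorsor V P] [TopologicalSpace V] [IsTopologicalAddTorsor P]
    {s : AffineSubspace R P} (hs : Dense (s : Set P)) : Dense (s.direction : Set V) := by
  obtain ⟨x, hx⟩ := hs.nonempty
  rw [AffineSubspace.coe_direction_eq_vsub_set_right hx]
  exact (Homeomorph.vaddConst x).symm.surjective.denseRange.dense_image
    (Homeomorph.vaddConst x).symm.continuous hs

theorem LinearMap.exists_linearIsometry_comp_eq {𝕜 M E F : Type*} [NontriviallyNormedField 𝕜]
    [AddCommGroup M] [Module 𝕜 M] [NormedAddCommGroup E] [NormedSpace 𝕜 E]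
    [NormedAddCommGroup F] [NormedSpace 𝕜 F] [CompleteSpace F]
    {f : M →ₗ[𝕜] E} {g : M →ₗ[𝕜] F} (hf : DenseRange f) (hfg : ∀ m, ‖g m‖ = ‖f m‖) :
    ∃ T : E →ₗᵢ[𝕜] F, T.toLinearMap ∘ₗ f = g := by
  set T := g.extendOfNorm f
  have hT : ∀ m, T (f m) = g m := extendOfNorm_eq hf ⟨1, fun m => by rw [one_mul, hfg]⟩
  have hnorm : ∀ p, ‖T p‖ = ‖p‖ := fun p =>
    hf.induction_on p (isClosed_eq (by fun_prop) (by fun_prop)) fun m => by rw [hT, hfg]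
  exact ⟨⟨T.toLinearMap, hnorm⟩, LinearMap.ext hT⟩

theorem Finsupp.inner_linearCombination_eq_of_inner_eq {𝕜 X E F : Type*} [RCLike 𝕜]
    [NormedAddCommGroup E] [InnerProductSpace 𝕜 E] [NormedAddCommGroup F] [InnerProductSpace 𝕜 F]
    {f : X → E} {g : X → F} (hfg : ∀ x y, ⟪f x, f y⟫_𝕜 = ⟪g x, g y⟫_𝕜) (c d : X →₀ 𝕜) :
    ⟪linearCombination 𝕜 f c, linearCombination 𝕜 f d⟫_𝕜
      = ⟪linearCombination 𝕜 g c, linearCombination 𝕜 g d⟫_𝕜 := by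
  have : ((innerₛₗ 𝕜).comp (linearCombination 𝕜 f)).compl₂ (linearCombination 𝕜 f)
      = ((innerₛₗ 𝕜).comp (linearCombination 𝕜 g)).compl₂ (linearCombination 𝕜 g) :=
    LinearMap.ext_basis Finsupp.basisSingleOne Finsupp.basisSingleOne fun x y => by
      simpa using hfg x y
  exact LinearMap.congr_fun₂ this c d

theorem exists_linearIsometry_of_inner_eq {𝕜 X E F : Type*} [RCLike 𝕜]
    [NormedAddCommGroup E] [InnerProductSpace 𝕜 E] [NormedAddCommGroup F] [InnerProductSpace 𝕜 F]
    [CompleteSpace F] {f : X → E} {g : X → F} (hfg : ∀ x y, ⟪f x, f y⟫_𝕜 = ⟪g x, g y⟫_𝕜)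
    (hf : Dense (Submodule.span 𝕜 (Set.range f) : Set E)) :
    ∃ T : E →ₗᵢ[𝕜] F, ∀ x, T (f x) = g x := by
  have hnorm (c : X →₀ 𝕜) :
      ‖Finsupp.linearCombination 𝕜 g c‖ = ‖Finsupp.linearCombination 𝕜 f c‖ := by
    rw [norm_eq_sqrt_re_inner (𝕜 := 𝕜), norm_eq_sqrt_re_inner (𝕜 := 𝕜),
      Finsupp.inner_linearCombination_eq_of_inner_eq hfg]
  have hdense : DenseRange (Finsupp.linearCombination 𝕜 f) := by
    rwa [DenseRange, ← LinearMap.coe_range, Finsupp.range_linearCombination]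
  obtain ⟨T, hT⟩ := LinearMap.exists_linearIsometry_comp_eq hdense hnorm
  exact ⟨T, fun x => by simpa using LinearMap.congr_fun hT (Finsupp.single x 1)⟩

theorem exists_affineIsometry_of_norm_sub_eq {X E F : Type*}
    [NormedAddCommGroup E] [InnerProductSpace ℝ E] [NormedAddCommGroup F] [InnerProductSpace ℝ F]
    [CompleteSpace F] {e : X → E} {e' : X → F} (h : ∀ x y, ‖e x - e y‖ = ‖e' x - e' y‖)
    (hdense : Dense (affineSpan ℝ (Set.range e) : Set E)) :
    ∃ u : E →ᵃⁱ[ℝ] F, ∀ x, u (e x) = e' x := by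
  obtain ⟨x₀⟩ : Nonempty X := by
    obtain ⟨-, x, -⟩ := (affineSpan_nonempty (k := ℝ)).mp hdense.nonempty
    exact ⟨x⟩
  have hinner (x y : X) : ⟪e x - e x₀, e y - e x₀⟫_ℝ = ⟪e' x - e' x₀, e' y - e' x₀⟫_ℝ := by
    rw [real_inner_eq_norm_mul_self_add_norm_mul_self_sub_norm_sub_mul_self_div_two,
      real_inner_eq_norm_mul_self_add_norm_mul_self_sub_norm_sub_mul_self_div_two,
      sub_sub_sub_cancel_right, sub_sub_sub_cancel_right, h, h, h]
  have hspan : Dense (Submodule.span ℝ (Set.range fun x => e x - e x₀) : Set E) := by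
    have := AffineSubspace.dense_direction hdense
    rwa [direction_affineSpan, vectorSpan_eq_span_vsub_set_right ℝ (Set.mem_range_self x₀),
      ← Set.range_comp] at this
  obtain ⟨T, hT⟩ := exists_linearIsometry_of_inner_eq hinner hspan
  refine ⟨⟨⟨fun p => T (p - e x₀) + e' x₀, T.toLinearMap, fun p v => ?_⟩, T.norm_map⟩, fun x => ?_⟩
  · simp only [vadd_eq_add, add_sub_assoc, map_add, add_assoc, LinearIsometry.coe_toLinearMap]
  · change T (e x - e x₀) + e' x₀ = e' x
    rw [hT, sub_add_cancel]

theorem AffineIsometry.eq_of_eqOn_of_dense_affineSpan {𝕜 V W P Q : Type*} [NormedField 𝕜]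
    [SeminormedAddCommGroup V] [NormedSpace 𝕜 V] [PseudoMetricSpace P] [NormedAddTorsor V P]
    [SeminormedAddCommGroup W] [NormedSpace 𝕜 W] [MetricSpace Q] [NormedAddTorsor W Q]
    {s : Set P} (hs : Dense (affineSpan 𝕜 s : Set P)) {u v : P →ᵃⁱ[𝕜] Q} (h : s.EqOn u v) :
    u = v :=
  AffineIsometry.ext <| congrFun <| Continuous.ext_on hs u.continuous v.continuous <|
    AffineMap.eqOn_affineSpan (f := u.toAffineMap) (g := v.toAffineMap) h

theorem stmt_16_general {X : Type*} {E E' : Type*}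
    [NormedAddCommGroup E] [InnerProductSpace ℝ E]
    [NormedAddCommGroup E'] [InnerProductSpace ℝ E'] [CompleteSpace E']
    (ψ : X → X → ℝ) (e : X → E) (e' : X → E')
    (he : ∀ x y, ψ x y = ‖e x - e y‖ ^ 2)
    (he' : ∀ x y, ψ x y = ‖e' x - e' y‖ ^ 2)
    (hdense : Dense ((affineSpan ℝ (Set.range e) : AffineSubspace ℝ E) : Set E)) :
    ∃! u : E →ᵃⁱ[ℝ] E', ∀ x, e' x = u (e x) := by
  have hnorm (x y : X) : ‖e x - e y‖ = ‖e' x - e' y‖ :=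
    (sq_eq_sq₀ (norm_nonneg _) (norm_nonneg _)).1 (by rw [← he, ← he'])
  obtain ⟨u, hu⟩ := exists_affineIsometry_of_norm_sub_eq hnorm hdense
  refine ⟨u, fun x => (hu x).symm, fun v hv => ?_⟩
  exact AffineIsometry.eq_of_eqOn_of_dense_affineSpan hdense (by rintro - ⟨x, rfl⟩; rw [← hv, hu])

theorem stmt_16 {X : Type*} {E E' : Type*}
    [NormedAddCommGroup E] [InnerProductSpace ℝ E] [CompleteSpace E]
    [NormedAddCommGroup E'] [InnerProductSpace ℝ E'] [CompleteSpace E']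
    (ψ : X → X → ℝ) (e : X → E) (e' : X → E')
    (he : ∀ x y, ψ x y = ‖e x - e y‖ ^ 2)
    (he' : ∀ x y, ψ x y = ‖e' x - e' y‖ ^ 2)
    (hdense : Dense ((affineSpan ℝ (Set.range e) : AffineSubspace ℝ E) : Set E))
    (hdense' : Dense ((affineSpan ℝ (Set.range e') : AffineSubspace ℝ E') : Set E')) :
    ∃! u : E →ᵃⁱ[ℝ] E', ∀ x, e' x = u (e x) :=
  stmt_16_general ψ e e' he he' hdense
end
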